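/- Let φ̂(ω) = (1/√2) e^{−πω²} (Gaussian) and μ > 0. Then for every ω ∈ ℝ, (1/2) e^{−2πμ²} ≤ Σ_{p∈ℤ} |Φ_p(ω)|² ≤ ((1/μ + 1) ‖φ̂‖_W)², where Φ_p(ω) = Σ_{η∈μI_p} φ̂(ω − η) and ‖·‖_W is the Wiener amalgam norm. In particular the Gaussian satisfies the two-sided bound required for the general α-DOST frame theorem. -/

import Mathlib

open MeasureTheory Complex Real FourierTransform

noncomputable def iS (α : ℝ) : ℕ → ℕ × ℕ
  | 0 => (0, 1)
  | p + 1 => ((iS α p).2, (iS α p).2 + ⌊((iS α p).2 : ℝ) ^ α⌋₊)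

/-- `i_p`, the left endpoint of the `p`-th interval. -/
noncomputable def ip (α : ℝ) (p : ℕ) : ℕ := (iS α p).1
/-- `s_p`, the right endpoint of the `p`-th interval. -/
noncomputable def sp (α : ℝ) (p : ℕ) : ℕ := (iS α p).2
/-- `β(p) = s_p - i_p`, the width of the `p`-th interval. -/
noncomputable def βp (α : ℝ) (p : ℕ) : ℕ := sp α p - ip α p

/-- The `ℤ`-indexed intervals of the α-partition: for `p < 0`, `I_p = -I_{-p}`. -/
noncomputable def IpZ (α : ℝ) (p : ℤ) : Finset ℤ :=
  if 0 ≤ p then Finset.Ico (ip α p.toNat : ℤ) (sp α p.toNat : ℤ)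
  else Finset.image (fun n => -n) (Finset.Ico (ip α (-p).toNat : ℤ) (sp α (-p).toNat : ℤ))

/-- Width of the `ℤ`-indexed interval `I_p`. -/
noncomputable def βZ (α : ℝ) (p : ℤ) : ℕ := βp α p.natAbs

/-- The scaled interval `μ I_p` as a subset of `ℝ`. -/
noncomputable def muIpZ (α μ : ℝ) (p : ℤ) : Set ℝ :=
  ↑(Finset.image (fun η : ℤ => μ * (η : ℝ)) (IpZ α p))

/-- `Φ_p(ω) = Σ_{η ∈ μ I_p} g(ω - η)`, where `g` plays the role of `φ̂`. -/
noncomputable def Φ (α μ : ℝ) (g : ℝ → ℂ) (p : ℤ) (ω : ℝ) : ℂ :=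
  ∑ η ∈ IpZ α p, g (ω - μ * (η : ℝ))

/-- The Gaussian window in the frequency domain: `φ̂(ω) = (1/√2) e^{-πω²}`. -/
noncomputable def gaussHat (ω : ℝ) : ℝ := (1 / Real.sqrt 2) * Real.exp (-π * ω ^ 2)

/-- Real-valued `Φ_p` built from a real window. -/
noncomputable def ΦR (α μ : ℝ) (g : ℝ → ℝ) (p : ℤ) (ω : ℝ) : ℝ :=
  ∑ η ∈ IpZ α p, g (ω - μ * (η : ℝ))

/-- The Wiener amalgam norm of a real function. -/
noncomputable def wienerNorm (g : ℝ → ℝ) : ℝ :=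
  ∑' n : ℤ, ⨆ x ∈ Set.Icc (n : ℝ) ((n : ℝ) + 1), |g x|

/-!
Lower bound: the intervals `I_p` tile `ℤ`, so `⌊ω / μ⌋ ∈ I_p` for some `p`; the corresponding
summand of `Φ_p(ω)` is `φ̂(t)` with `0 ≤ t < μ`, hence `Φ_p(ω) ≥ φ̂(μ)`, and
`φ̂(μ)² = e^{-2πμ²} / 2`.

Upper bound: all `Φ_p(ω)` are nonnegative, so `Σ_p Φ_p(ω)² ≤ (Σ_p Φ_p(ω))²`, and since the `I_p`
are disjoint, `Σ_p Φ_p(ω) ≤ Σ_{j ∈ ℤ} φ̂(ω - μ j)`. Each unit cell `[m, m + 1)` contains at most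
`1 / μ + 1` of the points `ω - μ j`, which bounds this sum by `(1 / μ + 1) ‖φ̂‖_W`.
-/

lemma ip_succ (α : ℝ) (p : ℕ) : ip α (p + 1) = sp α p := rfl

lemma sp_succ (α : ℝ) (p : ℕ) : sp α (p + 1) = sp α p + ⌊(sp α p : ℝ) ^ α⌋₊ := rfl

lemma one_le_sp (α : ℝ) (p : ℕ) : 1 ≤ sp α p := by
  induction p with
  | zero => rfl
  | succ p ih => rw [sp_succ]; omega

lemma one_le_ip (α : ℝ) {p : ℕ} (hp : p ≠ 0) : 1 ≤ ip α p := by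
  obtain ⟨p, rfl⟩ := Nat.exists_eq_succ_of_ne_zero hp
  exact one_le_sp α p

lemma ip_le_sp (α : ℝ) (p : ℕ) : ip α p ≤ sp α p := by
  cases p with
  | zero => exact Nat.zero_le _
  | succ p => rw [ip_succ, sp_succ]; omega

lemma monotone_ip (α : ℝ) : Monotone (ip α) :=
  monotone_nat_of_le_succ (ip_le_sp α)

lemma sp_le_ip_of_lt (α : ℝ) {p q : ℕ} (h : p < q) : sp α p ≤ ip α q :=
  ip_succ α p ▸ monotone_ip α h

lemma sp_lt_sp_succ {α : ℝ} (hα : 0 ≤ α) (p : ℕ) : sp α p < sp α (p + 1) := by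
  have : 1 ≤ ⌊(sp α p : ℝ) ^ α⌋₊ :=
    Nat.le_floor <| by exact_mod_cast Real.one_le_rpow (by exact_mod_cast one_le_sp α p) hα
  rw [sp_succ]; omega

lemma exists_ip_le_lt_sp {α : ℝ} (hα : 0 ≤ α) (n : ℕ) : ∃ p, ip α p ≤ n ∧ n < sp α p := by
  induction n with
  | zero => exact ⟨0, le_rfl, one_le_sp α 0⟩
  | succ n ih =>
    obtain ⟨p, hip, hsp⟩ := ih
    obtain h | h : n + 1 < sp α p ∨ n + 1 = sp α p := by omega
    · exact ⟨p, by omega, h⟩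
    · refine ⟨p + 1, (ip_succ α p).trans_le h.ge, ?_⟩
      rw [h]; exact sp_lt_sp_succ hα p

lemma mem_IpZ_iff {α : ℝ} {p j : ℤ} :
    j ∈ IpZ α p ↔ ip α p.natAbs ≤ j.natAbs ∧ j.natAbs < sp α p.natAbs ∧ (0 ≤ p ↔ 0 ≤ j) := by
  rcases lt_trichotomy p 0 with hp | rfl | hp
  · have := one_le_ip α (Int.natAbs_ne_zero.2 hp.ne)
    have hnat : (-p).toNat = p.natAbs := by omega
    simp only [IpZ, if_neg hp.not_ge, Finset.mem_image, Finset.mem_Ico, hnat]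
    constructor
    · rintro ⟨n, hn, rfl⟩; omega
    · intro h; exact ⟨-j, by omega, neg_neg j⟩
  · simp [IpZ, ip, sp, iS]; omega
  · have := one_le_ip α (Int.natAbs_ne_zero.2 hp.ne')
    have hnat : p.toNat = p.natAbs := by omega
    simp only [IpZ, if_pos hp.le, Finset.mem_Ico, hnat]
    omega

lemma pairwise_disjoint_IpZ (α : ℝ) : Pairwise (Function.onFun Disjoint (IpZ α)) := by
  intro p q hpq
  refine Finset.disjoint_left.2 fun j hjp hjq => ?_
  rw [mem_IpZ_iff] at hjp hjq
  rcases lt_trichotomy p.natAbs q.natAbs with h | h | h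
  · have := sp_le_ip_of_lt α h; omega
  · omega
  · have := sp_le_ip_of_lt α h; omega

lemma exists_mem_IpZ {α : ℝ} (hα : 0 ≤ α) (j : ℤ) : ∃ p, j ∈ IpZ α p := by
  obtain ⟨k, hip, hsp⟩ := exists_ip_le_lt_sp hα j.natAbs
  have hk : j ≠ 0 → k ≠ 0 := by
    rintro hj rfl
    exact hj (Int.natAbs_eq_zero.1 (Nat.lt_one_iff.1 hsp))
  refine ⟨if 0 ≤ j then k else -k, mem_IpZ_iff.2 ?_⟩
  split_ifs with hj
  · simp only [Int.natAbs_natCast]; omega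
  · have := hk (by omega)
    simp only [Int.natAbs_neg, Int.natAbs_natCast]; omega

noncomputable def localSup (g : ℝ → ℝ) (n : ℤ) : ℝ :=
  ⨆ x ∈ Set.Icc (n : ℝ) (n + 1), |g x|

lemma wienerNorm_eq_tsum_localSup (g : ℝ → ℝ) : wienerNorm g = ∑' n, localSup g n := rfl

lemma localSup_nonneg (g : ℝ → ℝ) (n : ℤ) : 0 ≤ localSup g n :=
  Real.iSup_nonneg fun _ => Real.iSup_nonneg fun _ => abs_nonneg _

-- Boundedness is needed: in `ℝ`, the supremum of an unbounded family is the junk value `0`.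
lemma abs_le_localSup {g : ℝ → ℝ} (hg : BddAbove (Set.range fun x => |g x|)) {n : ℤ} {x : ℝ}
    (hx : x ∈ Set.Icc (n : ℝ) (n + 1)) : |g x| ≤ localSup g n :=
  le_ciSup₂ (f := fun x (_ : x ∈ Set.Icc (n : ℝ) (n + 1)) => |g x|)
    (hg.mono <| Set.iUnion_subset fun x => Set.range_subset_iff.2 fun _ => Set.mem_range_self x)
    x hx

lemma localSup_le {g : ℝ → ℝ} {n : ℤ} {C : ℝ} (hC : 0 ≤ C)
    (h : ∀ x ∈ Set.Icc (n : ℝ) (n + 1), |g x| ≤ C) : localSup g n ≤ C :=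
  Real.iSup_le (fun x => Real.iSup_le (h x) hC) hC

lemma card_filter_floor_eq_le {μ : ℝ} (hμ : 0 < μ) (ω : ℝ) (F : Finset ℤ) (m : ℤ) :
    ((F.filter fun j : ℤ => ⌊ω - μ * j⌋ = m).card : ℝ) ≤ 1 / μ + 1 := by
  set a := (ω - m - 1) / μ with ha
  set b := (ω - m) / μ with hb
  have hsub : F.filter (fun j : ℤ => ⌊ω - μ * j⌋ = m) ⊆ Finset.Ioc ⌊a⌋ ⌊b⌋ := by
    intro j hj
    obtain ⟨-, hfl⟩ := Finset.mem_filter.1 hj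
    have h₁ : (m : ℝ) ≤ ω - μ * j := hfl ▸ Int.floor_le _
    have h₂ : ω - μ * j < m + 1 := hfl ▸ Int.lt_floor_add_one _
    refine Finset.mem_Ioc.2 ⟨Int.floor_lt.2 ?_, Int.le_floor.2 ?_⟩
    · rw [div_lt_iff₀ hμ]; linarith
    · rw [le_div_iff₀ hμ]; linarith
  have hba : b - a = 1 / μ := by rw [ha, hb]; field_simp; ring
  have hcard : ((Finset.Ioc ⌊a⌋ ⌊b⌋).card : ℝ) ≤ max ((⌊b⌋ : ℝ) - ⌊a⌋) 0 := by
    rw [Int.card_Ioc, ← Int.cast_sub, ← Int.cast_natCast, Int.toNat_eq_max]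
    push_cast; rfl
  calc ((F.filter fun j : ℤ => ⌊ω - μ * j⌋ = m).card : ℝ)
      ≤ (Finset.Ioc ⌊a⌋ ⌊b⌋).card := by exact_mod_cast Finset.card_le_card hsub
    _ ≤ max ((⌊b⌋ : ℝ) - ⌊a⌋) 0 := hcard
    _ ≤ 1 / μ + 1 := by
      refine max_le ?_ (by positivity)
      linarith [Int.floor_le b, Int.sub_one_lt_floor a]

lemma sum_abs_le_wienerNorm {g : ℝ → ℝ} (hg : BddAbove (Set.range fun x => |g x|))
    (hW : Summable (localSup g)) {μ : ℝ} (hμ : 0 < μ) (ω : ℝ) (F : Finset ℤ) :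
    ∑ j ∈ F, |g (ω - μ * j)| ≤ (1 / μ + 1) * wienerNorm g := by
  set cell : ℤ → ℤ := fun j => ⌊ω - μ * j⌋
  calc ∑ j ∈ F, |g (ω - μ * j)| ≤ ∑ j ∈ F, localSup g (cell j) :=
        Finset.sum_le_sum fun j _ =>
          abs_le_localSup hg ⟨Int.floor_le _, (Int.lt_floor_add_one _).le⟩
    _ = ∑ m ∈ F.image cell, ((F.filter fun j => cell j = m).card : ℝ) * localSup g m := by
        rw [Finset.sum_comp]; simp only [nsmul_eq_mul]
    _ ≤ ∑ m ∈ F.image cell, (1 / μ + 1) * localSup g m :=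
        Finset.sum_le_sum fun m _ => mul_le_mul_of_nonneg_right
          (card_filter_floor_eq_le hμ ω F m) (localSup_nonneg g m)
    _ ≤ (1 / μ + 1) * wienerNorm g := by
        rw [← Finset.mul_sum, wienerNorm_eq_tsum_localSup]
        gcongr
        exact hW.sum_le_tsum _ fun m _ => localSup_nonneg g m

lemma sum_ΦR_le_wienerNorm {g : ℝ → ℝ} (hg : BddAbove (Set.range fun x => |g x|))
    (hW : Summable (localSup g)) (α : ℝ) {μ : ℝ} (hμ : 0 < μ) (ω : ℝ) (P : Finset ℤ) :
    ∑ p ∈ P, ΦR α μ g p ω ≤ (1 / μ + 1) * wienerNorm g := by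
  have hdisj : (P : Set ℤ).PairwiseDisjoint (IpZ α) :=
    fun p _ q _ hpq => pairwise_disjoint_IpZ α hpq
  calc ∑ p ∈ P, ΦR α μ g p ω = ∑ j ∈ P.biUnion (IpZ α), g (ω - μ * j) :=
        (Finset.sum_biUnion hdisj).symm
    _ ≤ ∑ j ∈ P.biUnion (IpZ α), |g (ω - μ * j)| := Finset.sum_le_sum fun _ _ => le_abs_self _
    _ ≤ (1 / μ + 1) * wienerNorm g := sum_abs_le_wienerNorm hg hW hμ ω _

lemma gaussHat_nonneg (x : ℝ) : 0 ≤ gaussHat x := by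
  unfold gaussHat; positivity

lemma gaussHat_le_of_sq_le {a x : ℝ} (h : a ^ 2 ≤ x ^ 2) : gaussHat x ≤ gaussHat a := by
  have : -π * x ^ 2 ≤ -π * a ^ 2 := by nlinarith [Real.pi_pos]
  exact mul_le_mul_of_nonneg_left (Real.exp_le_exp.2 this) (by positivity)

lemma gaussHat_sq (μ : ℝ) : gaussHat μ ^ 2 = 1 / 2 * Real.exp (-2 * π * μ ^ 2) := by
  rw [gaussHat, mul_pow, div_pow, Real.sq_sqrt zero_le_two, ← Real.exp_nat_mul]
  ring_nf

lemma bddAbove_abs_gaussHat : BddAbove (Set.range fun x => |gaussHat x|) :=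
  ⟨gaussHat 0, Set.forall_mem_range.2 fun x =>
    (abs_of_nonneg (gaussHat_nonneg x)).trans_le
      (gaussHat_le_of_sq_le (by simpa using sq_nonneg x))⟩

-- The Gaussian is monotone on each side of `0`, so on a cell it peaks at an endpoint.
lemma localSup_gaussHat_le (n : ℤ) : localSup gaussHat n ≤ gaussHat n + gaussHat (n + 1) := by
  refine localSup_le (add_nonneg (gaussHat_nonneg _) (gaussHat_nonneg _)) fun x ⟨h₁, h₂⟩ => ?_
  rw [abs_of_nonneg (gaussHat_nonneg x)]
  rcases le_or_gt 0 n with hn | hn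
  · have : (0 : ℝ) ≤ n := by exact_mod_cast hn
    linarith [gaussHat_le_of_sq_le (a := n) (x := x) (by nlinarith), gaussHat_nonneg (n + 1)]
  · have : (n : ℝ) + 1 ≤ 0 := by exact_mod_cast hn
    linarith [gaussHat_le_of_sq_le (a := n + 1) (x := x) (by nlinarith), gaussHat_nonneg n]

lemma summable_gaussHat_int : Summable fun n : ℤ => gaussHat n := by
  simpa [gaussHat] using
    (summable_pow_mul_jacobiTheta₂_term_bound 0 one_pos 0).mul_left (1 / Real.sqrt 2)

lemma summable_localSup_gaussHat : Summable (localSup gaussHat) := by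
  refine Summable.of_nonneg_of_le (localSup_nonneg _) localSup_gaussHat_le ?_
  refine summable_gaussHat_int.add ?_
  simpa [Function.comp_def] using
    summable_gaussHat_int.comp_injective (add_left_injective (1 : ℤ))

lemma gaussHat_le_ΦR {α μ ω : ℝ} (hμ : 0 < μ) {p : ℤ} (hp : ⌊ω / μ⌋ ∈ IpZ α p) :
    gaussHat μ ≤ ΦR α μ gaussHat p ω := by
  have h₁ : μ * ⌊ω / μ⌋ ≤ ω := (le_div_iff₀' hμ).1 (Int.floor_le _)
  have h₂ : ω < μ * (⌊ω / μ⌋ + 1) := (div_lt_iff₀' hμ).1 (Int.lt_floor_add_one _)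
  calc gaussHat μ ≤ gaussHat (ω - μ * ⌊ω / μ⌋) := gaussHat_le_of_sq_le (by nlinarith)
    _ ≤ ΦR α μ gaussHat p ω :=
        Finset.single_le_sum (f := fun j : ℤ => gaussHat (ω - μ * j))
          (fun _ _ => gaussHat_nonneg _) hp

/-- the Gaussian window satisfies the two-sided bound
`(1/2) e^{-2πμ²} ≤ Σ_p |Φ_p(ω)|² ≤ ((1/μ + 1) ‖φ̂‖_W)²`. -/
theorem gaussian_two_sided (α : ℝ) (hα : α ∈ Set.Icc (0:ℝ) 1) (μ : ℝ) (hμ : 0 < μ) :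
    ∀ ω : ℝ,
      (1 / 2) * Real.exp (-2 * π * μ ^ 2) ≤ ∑' p : ℤ, (ΦR α μ gaussHat p ω) ^ 2 ∧
        ∑' p : ℤ, (ΦR α μ gaussHat p ω) ^ 2 ≤ ((1 / μ + 1) * wienerNorm gaussHat) ^ 2 := by
  intro ω
  have hΦ : ∀ p, 0 ≤ ΦR α μ gaussHat p ω := fun p => Finset.sum_nonneg fun _ _ => gaussHat_nonneg _
  have hpartial : ∀ P : Finset ℤ,
      ∑ p ∈ P, ΦR α μ gaussHat p ω ^ 2 ≤ ((1 / μ + 1) * wienerNorm gaussHat) ^ 2 := fun P =>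
    (Finset.sum_sq_le_sq_sum_of_nonneg fun p _ => hΦ p).trans <|
      pow_le_pow_left₀ (Finset.sum_nonneg fun p _ => hΦ p) (sum_ΦR_le_wienerNorm
        bddAbove_abs_gaussHat summable_localSup_gaussHat α hμ ω P) 2
  have hsum : Summable fun p => ΦR α μ gaussHat p ω ^ 2 :=
    summable_of_sum_le (fun _ => sq_nonneg _) hpartial
  refine ⟨?_, hsum.tsum_le_of_sum_le hpartial⟩
  obtain ⟨p, hp⟩ := exists_mem_IpZ hα.1 ⌊ω / μ⌋
  calc 1 / 2 * Real.exp (-2 * π * μ ^ 2) = gaussHat μ ^ 2 := (gaussHat_sq μ).symm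
    _ ≤ ΦR α μ gaussHat p ω ^ 2 := pow_le_pow_left₀ (gaussHat_nonneg μ) (gaussHat_le_ΦR hμ hp) 2
    _ ≤ ∑' p, ΦR α μ gaussHat p ω ^ 2 := hsum.le_tsum p fun _ _ => sq_nonneg _
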